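/- The function φ : [0, ln 2] → ℝ defined by φ(ξ) = 1/2 − √(h^{−1}(ln 2 − ξ)·(1 − h^{−1}(ln 2 − ξ))) is convex and monotone increasing on [0, ln 2]. Equivalently, in the parametrization ξ = ln 2 − h(x) with x ∈ [0, 1/2], φ(ξ) = 1/2 − √(x(1−x)). -/

import Mathlib

noncomputable section

open scoped Matrix ComplexOrder

/-- The algebra of operators on `(ℂ²)^{⊗ n}`, as `2^n × 2^n` matrices indexed by `Fin n → Fin 2`. -/
abbrev Mq (n : ℕ) := Matrix (Fin n → Fin 2) (Fin n → Fin 2) ℂ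

/-- Normalized trace `τ(X) = 2^{-n} tr X`. -/
def qTau {n : ℕ} (X : Mq n) : ℂ := ((2 : ℂ) ^ n)⁻¹ * X.trace

/-- Real part of the normalized trace. -/
def qTauR {n : ℕ} (X : Mq n) : ℝ := (qTau X).re

/-- Normalized Hilbert–Schmidt inner product `⟨X, Y⟩ = τ(X† Y)`. -/
def qInner {n : ℕ} (X Y : Mq n) : ℂ := qTau (Xᴴ * Y)

/-- `|X| = √(X† X)`. -/
def mAbs {n : ℕ} (X : Mq n) : Mq n :=
  (Matrix.posSemidef_conjTranspose_mul_self X).1.eigenvectorUnitary.1 *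
    Matrix.diagonal ((↑) ∘ (√·) ∘ (Matrix.posSemidef_conjTranspose_mul_self X).1.eigenvalues) *
    (star (Matrix.posSemidef_conjTranspose_mul_self X).1.eigenvectorUnitary : Mq n)

/-- The entropy `Ent(X) = τ(X ln X) − τ(X) ln τ(X)` (with the convention `0 ln 0 = 0`),
for positive semidefinite `X`, via the continuous functional calculus. -/
def mEnt {n : ℕ} (X : Mq n) : ℝ :=
  qTauR (cfc (fun x : ℝ => x * Real.log x) X) - qTauR X * Real.log (qTauR X)

/-- Real powers `X^p` of a positive semidefinite matrix, by functional calculus on the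
support (`0 ^ p = 0` for `p ≠ 0`). -/
def mPow {n : ℕ} (X : Mq n) (p : ℝ) : Mq n := cfc (fun x : ℝ => x ^ p) X

/-- Normalized Schatten `p`-norm `‖X‖_p = (τ(|X|^p))^{1/p}`. -/
def schatten {n : ℕ} (p : ℝ) (X : Mq n) : ℝ := qTauR (mPow (mAbs X) p) ^ (1 / p)

/-- Conditional expectation onto the `i`-th qubit being maximally mixed:
`E_i = I^{⊗(i-1)} ⊗ (τ(·) I) ⊗ I^{⊗(n-i)}`. -/
def condExpQ {n : ℕ} (i : Fin n) (X : Mq n) : Mq n :=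
  Matrix.of fun a b =>
    if a i = b i then
      (2 : ℂ)⁻¹ * ∑ c : Fin 2, X (Function.update a i c) (Function.update b i c)
    else 0

/-- The Lindblad generator `K_n = Σ_i L̂_i`, where `L̂_i` acts as `L(X) = X − τ(X) I`
on the `i`-th tensor factor. -/
def Kq (n : ℕ) (X : Mq n) : Mq n := ∑ i : Fin n, (X - condExpQ i X)

/-- The depolarizing channel on the `i`-th qubit:
`e^{-t} X + (1 - e^{-t}) τ_i(X) ⊗ I_i`. -/
def depolStep {n : ℕ} (t : ℝ) (i : Fin n) (X : Mq n) : Mq n :=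
  (Real.exp (-t) : ℂ) • X + ((1 : ℂ) - (Real.exp (-t) : ℂ)) • condExpQ i X

/-- `Ψ_t^{⊗ n}`: the `n`-fold tensor power of the qubit depolarizing channel, i.e. the
composition over all qubits `i` of the depolarizing channel acting on the `i`-th factor. -/
def psiDep {n : ℕ} (t : ℝ) (X : Mq n) : Mq n :=
  (List.finRange n).foldr (fun i Y => depolStep t i Y) X

/-- The binary entropy function `h(s) = −s ln s − (1−s) ln(1−s)`. -/
def binEnt (s : ℝ) : ℝ := -(s * Real.log s) - (1 - s) * Real.log (1 - s)

/-- `h⁻¹ : [0, ln 2] → [0, 1/2]`, the inverse of the restriction of the binary entropy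
function to `[0, 1/2]`. -/
def binEntInv (y : ℝ) : ℝ := Function.invFunOn binEnt (Set.Icc 0 (1 / 2)) y

/-- `φ(ξ) = 1/2 − √(h⁻¹(ln 2 − ξ)(1 − h⁻¹(ln 2 − ξ)))`. -/
def phiF (ξ : ℝ) : ℝ :=
  1 / 2 - Real.sqrt (binEntInv (Real.log 2 - ξ) * (1 - binEntInv (Real.log 2 - ξ)))

/-- `α(ξ) = φ(ξ)/ξ` for `ξ ∈ (0, ln 2]`, with `α(0) = 1/2` by continuous extension. -/
def alphaF (ξ : ℝ) : ℝ := if ξ = 0 then 1 / 2 else ξ⁻¹ * phiF ξ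

/-! In the parameter `x = h⁻¹(ln 2 − ξ) ∈ [0, 1/2]`, which decreases as `ξ` increases,
`φ = 1/2 − √(x(1−x))`. With `ℓ = artanh (1 − 2x) = ½ ln((1−x)/x)` one has `h'(x) = 2ℓ` and
`d/dx √(x(1−x)) = sinh ℓ`, so by Cauchy's mean value theorem every difference quotient of `φ`
is `sinh ℓ / (2ℓ)` at some intermediate `x`. This is positive, and increases with `ℓ` (it is a
chord slope through `0` of `sinh`, which is convex on `[0, ∞)`), hence with `ξ`: so `φ` is
increasing and convex. -/

open Real Set

lemma binEnt_eq_binEntropy : binEnt = binEntropy := by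
  ext s
  simp only [binEnt, binEntropy, log_inv]
  ring

lemma binEnt_strictMonoOn : StrictMonoOn binEnt (Icc 0 (1 / 2)) := by
  rw [binEnt_eq_binEntropy, one_div]
  exact binEntropy_strictMonoOn

lemma binEnt_surjOn : SurjOn binEnt (Icc 0 (1 / 2)) (Icc 0 (log 2)) := by
  rw [binEnt_eq_binEntropy, one_div]
  have := intermediate_value_Icc (by norm_num : (0 : ℝ) ≤ 2⁻¹) binEntropy_continuous.continuousOn
  rwa [binEntropy_zero, binEntropy_two_inv] at this

lemma binEntInv_mem_Icc {y : ℝ} (hy : y ∈ Icc 0 (log 2)) : binEntInv y ∈ Icc 0 (1 / 2) :=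
  binEnt_surjOn.mapsTo_invFunOn hy

lemma binEnt_binEntInv {y : ℝ} (hy : y ∈ Icc 0 (log 2)) : binEnt (binEntInv y) = y :=
  binEnt_surjOn.rightInvOn_invFunOn hy

lemma binEntInv_binEnt {x : ℝ} (hx : x ∈ Icc 0 (1 / 2)) : binEntInv (binEnt x) = x :=
  binEnt_strictMonoOn.injOn.leftInvOn_invFunOn hx

lemma binEntInv_strictMonoOn : StrictMonoOn binEntInv (Icc 0 (log 2)) := by
  intro y₁ hy₁ y₂ hy₂ hlt
  rwa [← binEnt_strictMonoOn.lt_iff_lt (binEntInv_mem_Icc hy₁) (binEntInv_mem_Icc hy₂),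
    binEnt_binEntInv hy₁, binEnt_binEntInv hy₂]

lemma log_one_sub_sub_log {x : ℝ} (h₀ : 0 < x) (h₁ : x < 1) :
    log (1 - x) - log x = 2 * artanh (1 - 2 * x) := by
  have hodds : (1 + (1 - 2 * x)) / (1 - (1 - 2 * x)) = (1 - x) / x := by
    field_simp
    ring
  rw [artanh_eq_half_log ⟨by linarith, by linarith⟩, hodds, log_div (by linarith) h₀.ne']
  ring

lemma hasDerivAt_binEnt {x : ℝ} (h₀ : 0 < x) (h₁ : x < 1) :
    HasDerivAt binEnt (2 * artanh (1 - 2 * x)) x := by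
  rw [binEnt_eq_binEntropy, ← log_one_sub_sub_log h₀ h₁]
  exact hasDerivAt_binEntropy h₀.ne' h₁.ne

lemma hasDerivAt_sqrt_mul_one_sub {x : ℝ} (h₀ : 0 < x) (h₁ : x < 1) :
    HasDerivAt (fun s => √(s * (1 - s))) (sinh (artanh (1 - 2 * x))) x := by
  have hpos : 0 < x * (1 - x) := mul_pos h₀ (by linarith)
  have hpoly : HasDerivAt (fun s => s * (1 - s)) (1 - 2 * x) x :=
    ((hasDerivAt_id x).mul ((hasDerivAt_id x).const_sub 1)).congr_deriv (by simp only [id]; ring)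
  refine ((hasDerivAt_sqrt hpos.ne').comp x hpoly).congr_deriv ?_
  have hsq : 1 - (1 - 2 * x) ^ 2 = 2 ^ 2 * (x * (1 - x)) := by ring
  rw [sinh_artanh ⟨by linarith, by linarith⟩, hsq, sqrt_mul' _ hpos.le, sqrt_sq zero_le_two]
  ring

lemma convexOn_sinh : ConvexOn ℝ (Ici 0) sinh := by
  refine MonotoneOn.convexOn_of_deriv (convex_Ici 0) continuous_sinh.continuousOn
    differentiable_sinh.differentiableOn ?_
  rw [Real.deriv_sinh, interior_Ici]
  exact cosh_strictMonoOn.monotoneOn.mono Ioi_subset_Ici_self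

lemma monotoneOn_sinh_div_self : MonotoneOn (fun s => sinh s / s) (Ioi 0) := by
  intro s hs t ht hst
  simpa only [sinh_zero, sub_zero] using convexOn_sinh.secant_mono self_mem_Ici
    (mem_Ici.2 hs.le) (mem_Ici.2 ht.le) hs.ne' ht.ne' hst

lemma phiF_log_two_sub_binEnt {x : ℝ} (hx : x ∈ Icc 0 (1 / 2)) :
    phiF (log 2 - binEnt x) = 1 / 2 - √(x * (1 - x)) := by
  rw [phiF, sub_sub_cancel, binEntInv_binEnt hx]

def phiParam (ξ : ℝ) : ℝ := binEntInv (log 2 - ξ)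

lemma log_two_sub_mem_Icc {ξ : ℝ} (hξ : ξ ∈ Icc 0 (log 2)) : log 2 - ξ ∈ Icc 0 (log 2) :=
  ⟨by linarith [hξ.2], by linarith [hξ.1]⟩

lemma phiParam_mem_Icc {ξ : ℝ} (hξ : ξ ∈ Icc 0 (log 2)) : phiParam ξ ∈ Icc 0 (1 / 2) :=
  binEntInv_mem_Icc (log_two_sub_mem_Icc hξ)

lemma Ioo_phiParam_subset {ξ₁ ξ₂ : ℝ} (h₁ : ξ₁ ∈ Icc 0 (log 2)) (h₂ : ξ₂ ∈ Icc 0 (log 2)) :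
    Ioo (phiParam ξ₂) (phiParam ξ₁) ⊆ Ioo 0 (1 / 2) :=
  Ioo_subset_Ioo (phiParam_mem_Icc h₂).1 (phiParam_mem_Icc h₁).2

lemma binEnt_phiParam {ξ : ℝ} (hξ : ξ ∈ Icc 0 (log 2)) : binEnt (phiParam ξ) = log 2 - ξ :=
  binEnt_binEntInv (log_two_sub_mem_Icc hξ)

lemma phiParam_strictAntiOn : StrictAntiOn phiParam (Icc 0 (log 2)) :=
  fun _ h₁ _ h₂ hlt =>
    binEntInv_strictMonoOn (log_two_sub_mem_Icc h₂) (log_two_sub_mem_Icc h₁) (by linarith)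

def phiSlope (x : ℝ) : ℝ := sinh (artanh (1 - 2 * x)) / artanh (1 - 2 * x) / 2

lemma artanh_one_sub_two_mul_pos {x : ℝ} (hx : x ∈ Ioo 0 (1 / 2)) : 0 < artanh (1 - 2 * x) :=
  artanh_pos ⟨by linarith [hx.2], by linarith [hx.1]⟩

lemma phiSlope_pos {x : ℝ} (hx : x ∈ Ioo 0 (1 / 2)) : 0 < phiSlope x := by
  have hℓ := artanh_one_sub_two_mul_pos hx
  exact div_pos (div_pos (sinh_pos_iff.2 hℓ) hℓ) two_pos

lemma phiSlope_antitoneOn : AntitoneOn phiSlope (Ioo 0 (1 / 2)) := by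
  intro x hx y hy hxy
  have hℓ : artanh (1 - 2 * y) ≤ artanh (1 - 2 * x) :=
    artanh_le_artanh (by linarith [hy.2]) (by linarith [hx.1]) (by linarith)
  exact div_le_div_of_nonneg_right (monotoneOn_sinh_div_self
    (artanh_one_sub_two_mul_pos hy) (artanh_one_sub_two_mul_pos hx) hℓ) zero_le_two

lemma exists_phiF_slope_eq {ξ₁ ξ₂ : ℝ} (h₁ : ξ₁ ∈ Icc 0 (log 2)) (h₂ : ξ₂ ∈ Icc 0 (log 2))
    (hlt : ξ₁ < ξ₂) : ∃ c ∈ Ioo (phiParam ξ₂) (phiParam ξ₁),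
      (phiF ξ₂ - phiF ξ₁) / (ξ₂ - ξ₁) = phiSlope c := by
  have hsub := Ioo_phiParam_subset h₁ h₂
  have hmem : ∀ c ∈ Ioo (phiParam ξ₂) (phiParam ξ₁), 0 < c ∧ c < 1 := fun c hc =>
    ⟨(hsub hc).1, by linarith [(hsub hc).2]⟩
  obtain ⟨c, hc, hcauchy⟩ := exists_ratio_hasDerivAt_eq_ratio_slope binEnt _
    (phiParam_strictAntiOn h₁ h₂ hlt)
    (binEnt_eq_binEntropy ▸ binEntropy_continuous).continuousOn
    (fun c hc => hasDerivAt_binEnt (hmem c hc).1 (hmem c hc).2) (fun s => √(s * (1 - s))) _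
    (by fun_prop) (fun c hc => hasDerivAt_sqrt_mul_one_sub (hmem c hc).1 (hmem c hc).2)
  refine ⟨c, hc, ?_⟩
  rw [binEnt_phiParam h₁, binEnt_phiParam h₂] at hcauchy
  have hℓ := artanh_one_sub_two_mul_pos (hsub hc)
  rw [phiSlope, phiF, phiF, ← phiParam, ← phiParam, div_eq_iff (by linarith)]
  field_simp
  linear_combination hcauchy

lemma phiF_monotoneOn : MonotoneOn phiF (Icc 0 (log 2)) := by
  intro ξ₁ h₁ ξ₂ h₂ hle
  rcases hle.eq_or_lt with rfl | hlt
  · rfl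
  obtain ⟨c, hc, hslope⟩ := exists_phiF_slope_eq h₁ h₂ hlt
  have := phiSlope_pos (Ioo_phiParam_subset h₁ h₂ hc)
  rw [← hslope, div_pos_iff_of_pos_right (sub_pos.2 hlt)] at this
  linarith

lemma phiF_convexOn : ConvexOn ℝ (Icc 0 (log 2)) phiF := by
  refine convexOn_iff_slope_mono_adjacent.2 ⟨convex_Icc _ _, ?_⟩
  intro x y z hx hz hxy hyz
  have hy : y ∈ Icc 0 (log 2) := ⟨hx.1.trans hxy.le, hyz.le.trans hz.2⟩
  obtain ⟨c₁, hc₁, hslope₁⟩ := exists_phiF_slope_eq hx hy hxy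
  obtain ⟨c₂, hc₂, hslope₂⟩ := exists_phiF_slope_eq hy hz hyz
  rw [hslope₁, hslope₂]
  exact phiSlope_antitoneOn (Ioo_phiParam_subset hy hz hc₂) (Ioo_phiParam_subset hx hy hc₁)
    (hc₂.2.trans hc₁.1).le

/-- Lemma 4 of the paper: `φ(ξ) = 1/2 − √(h⁻¹(ln 2 − ξ)(1 − h⁻¹(ln 2 − ξ)))` is convex
and monotone increasing on `[0, ln 2]`; in the parametrization `ξ = ln 2 − h(x)` with
`x ∈ [0, 1/2]`, it equals `1/2 − √(x(1−x))`. -/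
theorem phi_convex_monotone :
    ConvexOn ℝ (Set.Icc 0 (Real.log 2)) phiF ∧
      MonotoneOn phiF (Set.Icc 0 (Real.log 2)) ∧
      ∀ x ∈ Set.Icc (0 : ℝ) (1 / 2),
        phiF (Real.log 2 - binEnt x) = 1 / 2 - Real.sqrt (x * (1 - x)) :=
  ⟨phiF_convexOn, phiF_monotoneOn, fun _ hx => phiF_log_two_sub_binEnt hx⟩
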